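/- In the auxiliary hypergraph H1 built from K^{(k)}_{n,…,n} (with k ≥ 2), with d = n^{k²+1}/2 there is a constant c depending only on k such that: every pair of distinct tiles of H1 is contained in at most c·d/n conflicts of 𝒞 of size 3 and in at most c·d²/n conflicts of 𝒞 of size 4, and every triple of distinct tiles of H1 is contained in at most c·d/n conflicts of 𝒞 of size 4; in particular, Δ_{j'}(𝒞^{(j)}) ≤ d^{j−j'−ε} for all j ∈ {3,4}, 2 ≤ j' ≤ j−1, any ε ∈ (0, 1/(k²+2)), and sufficiently large n. -/

import Mathlib

open Finset

/-- The vertex set of `K^{(k)}_{n,…,n}`: pairs `(p, v)` where `p` indexes the part and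
`v` the vertex within part `X_p`. -/
abbrev HVtx (n k : ℕ) := Fin k × Fin n

/-- The color set `N₁`, of size `⌈n/2⌉`. -/
abbrev ColK (n : ℕ) := Fin ((n + 1) / 2)

/-- The vertex set of the auxiliary hypergraph `H₁`: the set `A` of `k`-element vertex
sets of the form `a ∪ {u}` with `a ∈ A_{k−1}` (encoded simply as finsets of vertices),
together with the set `B` of pairs `{i} ∪ a` of a color `i ∈ N₁` and a set `a ∈ A_{k−1}`. -/
abbrev VHK (n k : ℕ) := Finset (HVtx n k) ⊕ (ColK n × Finset (HVtx n k))

/-- `a` has at most one vertex in each part. -/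
def PartialTrans (n k : ℕ) (a : Finset (HVtx n k)) : Prop :=
  ∀ x ∈ a, ∀ y ∈ a, x.1 = y.1 → x = y

/-- `a ∈ A_{k−1}`: a `(k−1)`-element vertex set with at most one vertex from each part. -/
def IsA' (n k : ℕ) (a : Finset (HVtx n k)) : Prop :=
  a.card = k - 1 ∧ PartialTrans n k a

/-- `a ∈ A`: a set of the form `a' ∪ {u}` with `a' ∈ A_{k−1}` and `u ∉ a'`. -/
def IsA (n k : ℕ) (a : Finset (HVtx n k)) : Prop :=
  a.card = k ∧ ∃ b ⊆ a, IsA' n k b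

/-- A copy `S` of `K^{(k)}_{k+1,…,k+1}` in `K^{(k)}_{n,…,n}`, with its vertices indexed,
is described by a family `f` of injections `f p : Fin (k+1) → Fin n`, one per part; the
vertex of `S` in part `p` with index `ℓ` is `(p, f p ℓ)`.  A vertex set `a` is a
*transversal of `S`* if all its vertices are vertices of `S` and their indices within
their parts are pairwise distinct. -/
def IsTransOf (n k : ℕ) (f : Fin k → Fin (k + 1) → Fin n)
    (a : Finset (HVtx n k)) : Prop :=
  ∃ g : HVtx n k → Fin (k + 1),
    (∀ x ∈ a, x.2 = f x.1 (g x)) ∧ Set.InjOn g (a : Set (HVtx n k))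

/-- The vertex set (as a subset of `V(H₁)`) of the tile `e_{S,i}`: it consists of all
`a ∈ A` with `a ⊆ V(S)` that are transversals of `S`, together with all `{i} ∪ a ∈ B`
with `a ⊆ V(S)` a transversal of `S`. -/
def tileVertsK (n k : ℕ) (i : ColK n) (f : Fin k → Fin (k + 1) → Fin n) :
    Set (VHK n k) :=
  {v | (∃ a : Finset (HVtx n k), IsA n k a ∧ IsTransOf n k f a ∧ v = Sum.inl a) ∨
       (∃ a : Finset (HVtx n k), IsA' n k a ∧ IsTransOf n k f a ∧ v = Sum.inr (i, a))}

/-- `T` is a tile of `H₁` with color `i`. -/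
def IsTileColK (n k : ℕ) (i : ColK n) (T : Finset (VHK n k)) : Prop :=
  ∃ f : Fin k → Fin (k + 1) → Fin n,
    (∀ p, Function.Injective (f p)) ∧ (T : Set (VHK n k)) = tileVertsK n k i f

/-- `T` is a tile of `H₁`. -/
def IsTileK (n k : ℕ) (T : Finset (VHK n k)) : Prop :=
  ∃ i : ColK n, IsTileColK n k i T

/-- The edge of `K^{(k)}_{n,…,n}` choosing vertex `e p` in each part `p`, as a vertex
set. -/
def edgeOf (n k : ℕ) (e : Fin k → Fin n) : Finset (HVtx n k) :=
  Finset.univ.image fun p => (p, e p)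

/-- The conflict system `𝒞` for `H₁`: `C ∈ 𝒞` iff `C` is a matching of three or four
distinct tiles `{e_{S,i}, e_{S',i}, e_{T,j}, e_{T',j}}` with distinct colors `i ≠ j`, for
which there are two distinct parts `p ≠ q`, a base edge `e`, and alternative vertices
`a ≠ e p` in part `p` and `b ≠ e q` in part `q`, such that the four edges of the
corresponding copy of `K_{1,…,1,2,2}` belong (as vertices of `H₁`) to the four tiles as
indicated; such a set corresponds to a copy of `K_{1,…,1,2,2}` with no odd color class. -/
def IsConflictK (n k : ℕ) (C : Finset (Finset (VHK n k))) : Prop :=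
  (C.card = 3 ∨ C.card = 4) ∧
  (∀ T ∈ C, ∀ T' ∈ C, T ≠ T' → Disjoint T T') ∧
  ∃ i j : ColK n, i ≠ j ∧ ∃ T₁ T₂ T₃ T₄ : Finset (VHK n k),
    IsTileColK n k i T₁ ∧ IsTileColK n k i T₂ ∧
    IsTileColK n k j T₃ ∧ IsTileColK n k j T₄ ∧
    C = {T₁, T₂, T₃, T₄} ∧
    ∃ p q : Fin k, p ≠ q ∧ ∃ (e : Fin k → Fin n) (a b : Fin n), e p ≠ a ∧ e q ≠ b ∧
      Sum.inl (edgeOf n k e) ∈ T₁ ∧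
      Sum.inl (edgeOf n k (Function.update (Function.update e p a) q b)) ∈ T₂ ∧
      Sum.inl (edgeOf n k (Function.update e p a)) ∈ T₃ ∧
      Sum.inl (edgeOf n k (Function.update e q b)) ∈ T₄

/-!
Place the tiles of a conflict around the `4`-cycle of its copy of `K_{1,…,1,2,2}`: consecutive
tiles contain edges differing in one coordinate, opposite tiles share a color, and in each
coordinate each of the four edges agrees with one of its two neighbours. So if both neighbours
of a missing tile are known, it contains one of the `O(1)` coordinatewise mixes of known edges,
and a tile of a given color through a given edge is one of `O(n^{k²})` (each of its `k` parts is
an injection `Fin (k+1) → Fin n` hitting a prescribed vertex). When the opposite tile is known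
this fixes the color; when the opposite tile is the missing tile itself, that tile contains two
distinct mixes, which saves the factor `n` paid for its color. Either way one missing tile has
`O(n^{k²}) = O(d/n)` completions. With two missing tiles, one of them costs an extra factor `n`
(an unknown color, or an edge known up to one coordinate) and then the other is forced as
before: `O(n^{2k²+1}) = O(d²/n)`. Finally `c·d^{j-j'}/n ≤ d^{j-j'-ε}` once `n ≥ c·d^ε`,
which holds for large `n` because `(k²+1)ε < 1`.
-/

namespace Set

theorem ncard_setOf_exists_le {ι α : Type*} {s : Set ι} {P : ι → α → Prop} {m : ℕ}
    (h : ∀ i ∈ s, {a | P i a}.ncard ≤ m) (hs : s.Finite := by toFinite_tac) :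
    {a | ∃ i ∈ s, P i a}.ncard ≤ s.ncard * m := by
  have hunion : {a | ∃ i ∈ s, P i a} = ⋃ i ∈ hs.toFinset, {a | P i a} := by
    ext; simp
  rw [hunion, ncard_eq_toFinset_card s hs]
  calc _ ≤ ∑ i ∈ hs.toFinset, {a | P i a}.ncard := Finset.set_ncard_biUnion_le _ _
    _ ≤ hs.toFinset.card * m := by
      simpa using Finset.sum_le_card_nsmul _ _ m fun i hi => h i (hs.mem_toFinset.mp hi)

theorem ncard_setOf_fst_mem_le {α β : Type*} {A : Set α} {B : α → Set β} {m : ℕ}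
    (h : ∀ a ∈ A, (B a).ncard ≤ m) (hA : A.Finite := by toFinite_tac) :
    {x : α × β | x.1 ∈ A ∧ x.2 ∈ B x.1}.ncard ≤ A.ncard * m := by
  have hexists :
      {x : α × β | x.1 ∈ A ∧ x.2 ∈ B x.1} = {x | ∃ a ∈ A, x ∈ {a} ×ˢ B a} := by
    ext ⟨a, b⟩; simp
  rw [hexists]
  refine ncard_setOf_exists_le (fun a ha => ?_) hA
  change ({a} ×ˢ B a).ncard ≤ m
  simpa [ncard_prod] using h a ha

theorem ncard_pi_univ {ι : Type*} [Fintype ι] {α : ι → Type*} (S : ∀ i, Set (α i)) :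
    (pi univ S).ncard = ∏ i, (S i).ncard := by
  rw [← Nat.card_coe_set_eq, Nat.card_congr (Equiv.Set.univPi S), Nat.card_pi]
  simp only [Nat.card_coe_set_eq]

theorem ncard_le_ncard_of_sdiff_mem {α : Type*} [DecidableEq α] {S T : Set (Finset α)}
    {F : Finset α} (h : ∀ C ∈ S, F ⊆ C ∧ C \ F ∈ T) (hT : T.Finite := by toFinite_tac) :
    S.ncard ≤ T.ncard :=
  ncard_le_ncard_of_injOn (· \ F) (fun C hC => (h C hC).2)
    (fun C hC C' hC' hCC' => by
      rw [← Finset.sdiff_union_of_subset (h C hC).1,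
        ← Finset.sdiff_union_of_subset (h C' hC').1]
      exact congrArg (· ∪ F) hCC') hT

end Set

section Tuples

variable {α : Type*}

theorem ncard_setOf_mem_range_le [Finite α] (m : ℕ) (v : α) :
    {φ : Fin (m + 1) → α | v ∈ Set.range φ}.ncard ≤ (m + 1) * Nat.card α ^ m := by
  calc _ ≤ ((fun x : Fin (m + 1) × (Fin m → α) =>
            Fin.insertNth (α := fun _ => α) x.1 v x.2) '' Set.univ).ncard := by
        refine Set.ncard_le_ncard ?_ (Set.toFinite _)
        rintro φ ⟨ℓ, rfl⟩
        exact ⟨(ℓ, ℓ.removeNth φ), trivial, Fin.insertNth_self_removeNth ℓ φ⟩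
    _ ≤ (Set.univ : Set (Fin (m + 1) × (Fin m → α))).ncard :=
        Set.ncard_image_le (Set.toFinite _)
    _ = (m + 1) * Nat.card α ^ m := by simp [Nat.card_fun]

theorem ncard_setOf_mem_range_two_le [Finite α] (m : ℕ) {v v' : α} (hv : v ≠ v') :
    {φ : Fin (m + 2) → α | v ∈ Set.range φ ∧ v' ∈ Set.range φ}.ncard ≤
      (m + 2) * ((m + 1) * Nat.card α ^ m) := by
  calc _ ≤ ((fun x : Fin (m + 2) × (Fin (m + 1) → α) =>
            Fin.insertNth (α := fun _ => α) x.1 v x.2) ''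
          (Set.univ ×ˢ {ψ | v' ∈ Set.range ψ})).ncard := by
        refine Set.ncard_le_ncard ?_ (Set.toFinite _)
        rintro φ ⟨⟨ℓ, rfl⟩, ℓ', rfl⟩
        obtain ⟨z, rfl⟩ :=
          Fin.exists_succAbove_eq (x := ℓ') (y := ℓ) fun h => hv (by rw [h])
        exact ⟨(ℓ, ℓ.removeNth φ), ⟨trivial, z, rfl⟩,
          Fin.insertNth_self_removeNth ℓ φ⟩
    _ ≤ (Set.univ ×ˢ {ψ : Fin (m + 1) → α | v' ∈ Set.range ψ}).ncard :=
        Set.ncard_image_le (Set.toFinite _)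
    _ ≤ (m + 2) * ((m + 1) * Nat.card α ^ m) := by
        rw [Set.ncard_prod, Set.ncard_univ, Nat.card_fin]
        exact Nat.mul_le_mul_left _ (ncard_setOf_mem_range_le m v')

variable {ι : Type*}

def mixes (E : Set (ι → α)) : Set (ι → α) :=
  {e | ∃ g ∈ E, ∃ h ∈ E, ∀ r, e r = g r ∨ e r = h r}

def nearby (E : Set (ι → α)) : Set (ι → α) :=
  {e | ∃ g ∈ E, ∃ s, ∀ r, r ≠ s → e r = g r}

theorem ncard_mixes_le [Fintype ι] [Finite α] (E : Set (ι → α)) :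
    (mixes E).ncard ≤ E.ncard * E.ncard * 2 ^ Fintype.card ι := by
  classical
  calc _ ≤ ((fun x : (ι → α) × (ι → α) × (ι → Bool) =>
            fun r => if x.2.2 r then x.1 r else x.2.1 r) '' (E ×ˢ E ×ˢ Set.univ)).ncard := by
        refine Set.ncard_le_ncard ?_ (Set.toFinite _)
        rintro e ⟨g, hg, h, hh, hmix⟩
        refine ⟨(g, h, fun r => decide (e r = g r)), ⟨hg, hh, trivial⟩, funext fun r => ?_⟩
        by_cases hr : e r = g r
        · simp [hr]
        · simp only [hr, decide_false, Bool.false_eq_true, if_false]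
          exact ((hmix r).resolve_left hr).symm
    _ ≤ (E ×ˢ E ×ˢ (Set.univ : Set (ι → Bool))).ncard :=
        Set.ncard_image_le (Set.toFinite _)
    _ = E.ncard * E.ncard * 2 ^ Fintype.card ι := by
        simp [Set.ncard_prod, Nat.card_eq_fintype_card, mul_assoc]

theorem ncard_nearby_le [Finite ι] [Finite α] (E : Set (ι → α)) :
    (nearby E).ncard ≤ E.ncard * (Nat.card ι * Nat.card α) := by
  classical
  calc _ ≤ ((fun x : (ι → α) × ι × α => Function.update x.1 x.2.1 x.2.2)
          '' (E ×ˢ Set.univ)).ncard := by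
        refine Set.ncard_le_ncard ?_ (Set.toFinite _)
        rintro e ⟨g, hg, s, hs⟩
        refine ⟨(g, s, e s), ⟨hg, trivial⟩, funext fun r => ?_⟩
        by_cases hr : r = s
        · subst hr; simp
        · simp [Function.update_of_ne hr, hs r hr]
    _ ≤ (E ×ˢ (Set.univ : Set (ι × α))).ncard := Set.ncard_image_le (Set.toFinite _)
    _ = E.ncard * (Nat.card ι * Nat.card α) := by simp [Set.ncard_prod]

end Tuples

section Tiles

variable {n k : ℕ}

def edgesIn (T : Finset (VHK n k)) : Set (Fin k → Fin n) :=
  {e | Sum.inl (edgeOf n k e) ∈ T}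

theorem mem_range_of_mem_edgesIn {i : ColK n} {f : Fin k → Fin (k + 1) → Fin n}
    {T : Finset (VHK n k)} (hT : (T : Set (VHK n k)) = tileVertsK n k i f)
    {e : Fin k → Fin n} (he : e ∈ edgesIn T) (p : Fin k) : e p ∈ Set.range (f p) := by
  have he' : (Sum.inl (edgeOf n k e) : VHK n k) ∈ tileVertsK n k i f := hT ▸ he
  obtain ⟨a, -, ⟨g, hg, -⟩, ha⟩ | ⟨a, -, -, ha⟩ := he'
  · cases ha
    exact ⟨g (p, e p), (hg (p, e p) (Finset.mem_image_of_mem _ (Finset.mem_univ p))).symm⟩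
  · cases ha

theorem ncard_edgesIn_le {T : Finset (VHK n k)} (hT : IsTileK n k T) :
    (edgesIn T).ncard ≤ (k + 1) ^ k := by
  obtain ⟨i, f, -, hf⟩ := hT
  calc _ ≤ ((fun g : Fin k → Fin (k + 1) => fun p => f p (g p)) '' Set.univ).ncard := by
        refine Set.ncard_le_ncard (fun e he => ?_) (Set.toFinite _)
        choose g hg using mem_range_of_mem_edgesIn hf he
        exact ⟨g, trivial, funext hg⟩
    _ ≤ (Set.univ : Set (Fin k → Fin (k + 1))).ncard := Set.ncard_image_le (Set.toFinite _)
    _ = (k + 1) ^ k := by simp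

-- Colors are recorded only in `B`-vertices; a tile has one: `{i} ∪ a` with `a` the transversal
-- of `S` through the first `k - 1` parts.
theorem exists_inr_mem {i : ColK n} {f : Fin k → Fin (k + 1) → Fin n} {T : Finset (VHK n k)}
    (hT : (T : Set (VHK n k)) = tileVertsK n k i f) : ∃ a, Sum.inr (i, a) ∈ T := by
  let ι : Fin (k - 1) → Fin k := Fin.castLE (Nat.sub_le k 1)
  let u : Fin (k - 1) → HVtx n k := fun t => (ι t, f (ι t) (ι t).castSucc)
  have hu : Function.Injective u := fun t t' h =>
    Fin.castLE_injective (Nat.sub_le k 1) (congrArg Prod.fst h)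
  have htrans : PartialTrans n k (Finset.univ.image u) := by
    simp only [PartialTrans, Finset.mem_image, Finset.mem_univ, true_and]
    rintro _ ⟨t, rfl⟩ _ ⟨t', rfl⟩ h
    rw [Fin.castLE_injective (Nat.sub_le k 1) h]
  refine ⟨Finset.univ.image u, ?_⟩
  rw [← Finset.mem_coe, hT]
  refine Or.inr ⟨_, ⟨by simp [Finset.card_image_of_injective _ hu], htrans⟩,
    ⟨fun x => x.1.castSucc, ?_,
      fun x hx y hy h => htrans x hx y hy (Fin.castSucc_injective _ h)⟩,
    rfl⟩
  simp only [Finset.mem_image, Finset.mem_univ, true_and]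
  rintro _ ⟨t, rfl⟩
  rfl

theorem IsTileColK.eq {i i' : ColK n} {T : Finset (VHK n k)} (h : IsTileColK n k i T)
    (h' : IsTileColK n k i' T) : i = i' := by
  obtain ⟨f, -, hf⟩ := h
  obtain ⟨f', -, hf'⟩ := h'
  obtain ⟨a, ha⟩ := exists_inr_mem hf
  have ha' : (Sum.inr (i, a) : VHK n k) ∈ tileVertsK n k i' f' := hf' ▸ ha
  obtain ⟨b, -, -, hb⟩ | ⟨b, -, -, hb⟩ := ha'
  · cases hb
  · cases hb
    rfl

theorem ncard_setOf_isTileColK_le (i : ColK n) {P : Finset (VHK n k) → Prop}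
    (S : Fin k → Set (Fin (k + 1) → Fin n))
    (hS : ∀ (U : Finset (VHK n k)) f,
      (U : Set (VHK n k)) = tileVertsK n k i f → P U → ∀ p, f p ∈ S p) :
    {U | IsTileColK n k i U ∧ P U}.ncard ≤ ∏ p, (S p).ncard := by
  calc _ ≤ (tileVertsK n k i '' Set.univ.pi S).ncard := by
        refine Set.ncard_le_ncard_of_injOn (fun U => (U : Set (VHK n k))) ?_
          (Finset.coe_injective.injOn) (Set.toFinite _)
        rintro U ⟨⟨f, -, hf⟩, hP⟩
        exact ⟨f, fun p _ => hS U f hf hP p, hf.symm⟩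
    _ ≤ (Set.univ.pi S).ncard := Set.ncard_image_le (Set.toFinite _)
    _ = ∏ p, (S p).ncard := Set.ncard_pi_univ S

theorem ncard_isTileColK_mem_edgesIn_le (i : ColK n) (e : Fin k → Fin n) :
    {U | IsTileColK n k i U ∧ e ∈ edgesIn U}.ncard ≤ (k + 1) ^ k * n ^ (k ^ 2) := by
  calc _ ≤ ∏ p, {φ : Fin (k + 1) → Fin n | e p ∈ Set.range φ}.ncard :=
        ncard_setOf_isTileColK_le i _ fun U f hf he => mem_range_of_mem_edgesIn hf he
    _ ≤ ∏ _p : Fin k, (k + 1) * n ^ k := Finset.prod_le_prod' fun p _ => by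
        simpa only [Nat.card_fin] using ncard_setOf_mem_range_le k (e p)
    _ = (k + 1) ^ k * n ^ (k ^ 2) := by
        rw [Finset.prod_const, Finset.card_univ, Fintype.card_fin, mul_pow, ← pow_mul, sq]

theorem ncard_isTileColK_mem_edgesIn_two_le (hk : 1 ≤ k) (i : ColK n) {e e' : Fin k → Fin n}
    (hne : e ≠ e') :
    {U | IsTileColK n k i U ∧ e ∈ edgesIn U ∧ e' ∈ edgesIn U}.ncard ≤
      k * (k + 1) ^ k * n ^ (k ^ 2 - 1) := by
  obtain ⟨k, rfl⟩ := Nat.exists_eq_add_of_le' hk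
  obtain ⟨p₀, hp₀⟩ := Function.ne_iff.mp hne
  let S p := {φ : Fin (k + 2) → Fin n | e p ∈ Set.range φ ∧ e' p ∈ Set.range φ}
  have hS : ∀ p, (S p).ncard ≤ (k + 2) * n ^ (k + 1) := fun p => by
    have h := ncard_setOf_mem_range_le (α := Fin n) (k + 1) (e p)
    rw [Nat.card_fin] at h
    exact (Set.ncard_le_ncard (fun φ hφ => hφ.1) (Set.toFinite _)).trans h
  have hexp : (k + 1) ^ 2 - 1 = k + (k + 1) * k := Nat.sub_eq_of_eq_add (by ring)
  calc _ ≤ ∏ p, (S p).ncard := ncard_setOf_isTileColK_le i _ fun U f hf he p =>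
        ⟨mem_range_of_mem_edgesIn hf he.1 p, mem_range_of_mem_edgesIn hf he.2 p⟩
    _ = (S p₀).ncard * ∏ p, (S (p₀.succAbove p)).ncard := Fin.prod_univ_succAbove _ p₀
    _ ≤ ((k + 2) * ((k + 1) * n ^ k)) * ∏ _p : Fin k, (k + 2) * n ^ (k + 1) := by
        gcongr with p
        · simpa only [Nat.card_fin] using ncard_setOf_mem_range_two_le k hp₀
        · exact hS _
    _ = (k + 1) * (k + 1 + 1) ^ (k + 1) * n ^ ((k + 1) ^ 2 - 1) := by
        rw [Finset.prod_const, Finset.card_univ, Fintype.card_fin, hexp, mul_pow, ← pow_mul]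
        ring

end Tiles

section Extensions

variable {n k : ℕ}

def edgesOf (F : Finset (Finset (VHK n k))) : Set (Fin k → Fin n) :=
  {e | ∃ T ∈ F, e ∈ edgesIn T}

def colorsOf (F : Finset (Finset (VHK n k))) : Set (ColK n) :=
  {i | ∃ T ∈ F, IsTileColK n k i T}

theorem ncard_edgesOf_le {F : Finset (Finset (VHK n k))} (hF : ∀ T ∈ F, IsTileK n k T) :
    (edgesOf F).ncard ≤ F.card * (k + 1) ^ k :=
  (Set.ncard_setOf_exists_le (s := (F : Set (Finset (VHK n k))))
    fun T hT => ncard_edgesIn_le (hF T hT)).trans_eq (by rw [Set.ncard_coe_finset])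

theorem ncard_colorsOf_le (F : Finset (Finset (VHK n k))) : (colorsOf F).ncard ≤ F.card := by
  have h := Set.ncard_setOf_exists_le (s := (F : Set (Finset (VHK n k))))
    (P := fun T i => IsTileColK n k i T) (m := 1)
    fun T _ => (Set.ncard_le_one).mpr fun _ hi _ hi' => IsTileColK.eq hi hi'
  rwa [Set.ncard_coe_finset, mul_one] at h

theorem ncard_mixes_edgesOf_le {F : Finset (Finset (VHK n k))} (hF : ∀ T ∈ F, IsTileK n k T)
    {f : ℕ} (hf : F.card ≤ f) :
    (mixes (edgesOf F)).ncard ≤ (f * (k + 1) ^ k) ^ 2 * 2 ^ k := by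
  have h := (ncard_edgesOf_le hF).trans (Nat.mul_le_mul_right _ hf)
  calc _ ≤ (edgesOf F).ncard * (edgesOf F).ncard * 2 ^ k := by
        simpa using ncard_mixes_le (edgesOf F)
    _ ≤ (f * (k + 1) ^ k) ^ 2 * 2 ^ k := by rw [sq]; gcongr

theorem ncard_nearby_edgesOf_le {F : Finset (Finset (VHK n k))} (hF : ∀ T ∈ F, IsTileK n k T)
    {f : ℕ} (hf : F.card ≤ f) : (nearby (edgesOf F)).ncard ≤ f * (k + 1) ^ k * (k * n) := by
  calc _ ≤ (edgesOf F).ncard * (k * n) := by simpa using ncard_nearby_le (edgesOf F)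
    _ ≤ f * (k + 1) ^ k * (k * n) := by
        gcongr; exact (ncard_edgesOf_le hF).trans (Nat.mul_le_mul_right _ hf)

def tilesThrough (S : Set (ColK n)) (X : Set (Fin k → Fin n)) : Set (Finset (VHK n k)) :=
  {U | ∃ i ∈ S, ∃ e ∈ X, IsTileColK n k i U ∧ e ∈ edgesIn U}

def tilesThroughTwo (S : Set (ColK n)) (X : Set (Fin k → Fin n)) : Set (Finset (VHK n k)) :=
  {U | ∃ i ∈ S, ∃ e ∈ X ×ˢ X,
    e.1 ≠ e.2 ∧ IsTileColK n k i U ∧ e.1 ∈ edgesIn U ∧ e.2 ∈ edgesIn U}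

theorem ncard_tilesThrough_le (S : Set (ColK n)) (X : Set (Fin k → Fin n)) :
    (tilesThrough S X).ncard ≤ S.ncard * (X.ncard * ((k + 1) ^ k * n ^ (k ^ 2))) :=
  Set.ncard_setOf_exists_le fun i _ =>
    Set.ncard_setOf_exists_le fun e _ => ncard_isTileColK_mem_edgesIn_le i e

theorem ncard_tilesThroughTwo_le (hk : 1 ≤ k) (S : Set (ColK n)) (X : Set (Fin k → Fin n)) :
    (tilesThroughTwo S X).ncard ≤
      S.ncard * (X.ncard * X.ncard * (k * (k + 1) ^ k * n ^ (k ^ 2 - 1))) := by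
  refine Set.ncard_setOf_exists_le fun i _ => ?_
  rw [← Set.ncard_prod]
  refine Set.ncard_setOf_exists_le fun e _ => ?_
  by_cases he : e.1 = e.2
  · simp [he]
  · simpa [he] using ncard_isTileColK_mem_edgesIn_two_le hk i he

theorem ncard_univ_colK_le (n : ℕ) : (Set.univ : Set (ColK n)).ncard ≤ n := by
  simp only [Set.ncard_univ, Nat.card_eq_fintype_card, Fintype.card_fin]
  omega

/-- Candidates for the tile completing a conflict all of whose other tiles lie in `F`:
there are `O(n^{k²})` of them. -/
def cheapTiles (F : Finset (Finset (VHK n k))) : Set (Finset (VHK n k)) :=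
  tilesThrough (colorsOf F) (mixes (edgesOf F)) ∪ tilesThroughTwo Set.univ (mixes (edgesOf F))

/-- Candidates for one of the two tiles missing from `F` in a conflict: `O(n^{k²+1})` of them. -/
def costlyTiles (F : Finset (Finset (VHK n k))) : Set (Finset (VHK n k)) :=
  tilesThrough Set.univ (mixes (edgesOf F)) ∪ tilesThrough (colorsOf F) (nearby (edgesOf F))

theorem isTileK_of_mem_costlyTiles {F : Finset (Finset (VHK n k))} {U : Finset (VHK n k)}
    (hU : U ∈ costlyTiles F) : IsTileK n k U := by
  obtain ⟨i, -, -, -, hi, -⟩ | ⟨i, -, -, -, hi, -⟩ := hU <;> exact ⟨i, hi⟩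

theorem exists_ncard_cheapTiles_le (hk : 1 ≤ k) (f : ℕ) :
    ∃ c, ∀ n (F : Finset (Finset (VHK n k))), (∀ T ∈ F, IsTileK n k T) → F.card ≤ f →
      (cheapTiles F).ncard ≤ c * n ^ (k ^ 2) := by
  set X := (f * (k + 1) ^ k) ^ 2 * 2 ^ k
  refine ⟨f * (X * (k + 1) ^ k) + X * X * (k * (k + 1) ^ k), fun n F hF hf => ?_⟩
  have hX : (mixes (edgesOf F)).ncard ≤ X := ncard_mixes_edgesOf_le hF hf
  have hpow : n * n ^ (k ^ 2 - 1) = n ^ (k ^ 2) := by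
    rw [← pow_succ', Nat.sub_add_cancel (Nat.one_le_pow _ _ hk)]
  calc _ ≤ _ := Set.ncard_union_le _ _
    _ ≤ (colorsOf F).ncard * ((mixes (edgesOf F)).ncard * ((k + 1) ^ k * n ^ (k ^ 2))) +
        (Set.univ : Set (ColK n)).ncard * ((mixes (edgesOf F)).ncard *
          (mixes (edgesOf F)).ncard * (k * (k + 1) ^ k * n ^ (k ^ 2 - 1))) :=
        add_le_add (ncard_tilesThrough_le _ _) (ncard_tilesThroughTwo_le hk _ _)
    _ ≤ f * (X * ((k + 1) ^ k * n ^ (k ^ 2))) +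
        n * (X * X * (k * (k + 1) ^ k * n ^ (k ^ 2 - 1))) := by
        gcongr
        · exact (ncard_colorsOf_le F).trans hf
        · exact ncard_univ_colK_le n
    _ = (f * (X * (k + 1) ^ k) + X * X * (k * (k + 1) ^ k)) * n ^ (k ^ 2) := by
        rw [← hpow]; ring

theorem exists_ncard_costlyTiles_le (f : ℕ) :
    ∃ c, ∀ n (F : Finset (Finset (VHK n k))), (∀ T ∈ F, IsTileK n k T) → F.card ≤ f →
      (costlyTiles F).ncard ≤ c * n ^ (k ^ 2 + 1) := by
  set X := (f * (k + 1) ^ k) ^ 2 * 2 ^ k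
  refine ⟨X * (k + 1) ^ k + f * (f * (k + 1) ^ k * k * (k + 1) ^ k), fun n F hF hf => ?_⟩
  calc _ ≤ _ := Set.ncard_union_le _ _
    _ ≤ (Set.univ : Set (ColK n)).ncard * ((mixes (edgesOf F)).ncard *
          ((k + 1) ^ k * n ^ (k ^ 2))) +
        (colorsOf F).ncard * ((nearby (edgesOf F)).ncard * ((k + 1) ^ k * n ^ (k ^ 2))) :=
        add_le_add (ncard_tilesThrough_le _ _) (ncard_tilesThrough_le _ _)
    _ ≤ n * (X * ((k + 1) ^ k * n ^ (k ^ 2))) +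
        f * (f * (k + 1) ^ k * (k * n) * ((k + 1) ^ k * n ^ (k ^ 2))) := by
        gcongr
        · exact ncard_univ_colK_le n
        · exact ncard_mixes_edgesOf_le hF hf
        · exact (ncard_colorsOf_le F).trans hf
        · exact ncard_nearby_edgesOf_le hF hf
    _ = (X * (k + 1) ^ k + f * (f * (k + 1) ^ k * k * (k + 1) ^ k)) * n ^ (k ^ 2 + 1) := by
        ring

end Extensions

section ConflictCycle

variable {n k : ℕ}

/-- The tiles `W m` of the conflict `C` placed around the `4`-cycle `K_{2,2}` of its copy of
`K_{1,…,1,2,2}`; three-tile conflicts are those where two opposite tiles coincide. -/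
structure IsConflictCycle (C : Finset (Finset (VHK n k))) (W : Fin 4 → Finset (VHK n k))
    (col : Fin 4 → ColK n) (edge : Fin 4 → Fin k → Fin n) : Prop where
  eq_image : C = Finset.univ.image W
  isTileColK : ∀ m, IsTileColK n k (col m) (W m)
  mem_edgesIn : ∀ m, edge m ∈ edgesIn (W m)
  col_add_two : ∀ m, col (m + 2) = col m
  col_add_one_ne : ∀ m, col (m + 1) ≠ col m
  mix : ∀ m r, edge m r = edge (m + 1) r ∨ edge m r = edge (m - 1) r
  near : ∀ m, ∃ s, ∀ r, r ≠ s → edge m r = edge (m + 1) r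
  edge_add_two_ne : ∀ m, edge (m + 2) ≠ edge m

theorem IsConflictK.exists_isConflictCycle {C : Finset (Finset (VHK n k))}
    (hC : IsConflictK n k C) : ∃ W col edge, IsConflictCycle C W col edge := by
  obtain ⟨-, -, i, j, hij, T₁, T₂, T₃, T₄, h₁, h₂, h₃, h₄, rfl,
    p, q, hpq, e, a, b, ha, -, m₁, m₂, m₃, m₄⟩ := hC
  have hqp := hpq.symm
  refine ⟨![T₁, T₃, T₂, T₄], ![i, j, i, j],
    ![e, Function.update e p a, Function.update (Function.update e p a) q b,
      Function.update e q b], ⟨?_, ?_, ?_, ?_, ?_, ?_, ?_, ?_⟩⟩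
  · ext T
    simp only [mem_insert, mem_singleton, mem_image, mem_univ, true_and, Fin.exists_fin_succ,
      Fin.isValue, Matrix.cons_val_zero, Matrix.cons_val_succ, Matrix.cons_val_fin_one,
      exists_const]
    tauto
  · intro m; fin_cases m <;> simpa
  · intro m; fin_cases m <;> simpa
  · intro m; fin_cases m <;> rfl
  · intro m; fin_cases m <;> simp [hij, hij.symm]
  · intro m r
    fin_cases m <;> by_cases hrp : r = p <;> by_cases hrq : r = q <;>
      simp [hrp, hrq, hpq, hqp]
  · intro m
    fin_cases m
    · exact ⟨p, fun r hr => by simp [Function.update_of_ne hr]⟩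
    · exact ⟨q, fun r hr => by simp [Function.update_of_ne hr]⟩
    · exact ⟨p, fun r hr => by simp [Function.update_apply, hr]⟩
    · exact ⟨q, fun r hr => by simp [Function.update_of_ne hr]⟩
  · intro m
    fin_cases m
    · exact fun h => ha (by simpa [hpq, hqp] using (congrFun h p).symm)
    · exact fun h => ha (by simpa [hpq, hqp] using congrFun h p)
    · exact fun h => ha (by simpa [hpq, hqp] using congrFun h p)
    · exact fun h => ha (by simpa [hpq, hqp] using (congrFun h p).symm)

namespace IsConflictCycle

variable {C F : Finset (Finset (VHK n k))} {W : Fin 4 → Finset (VHK n k)} {col : Fin 4 → ColK n}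
  {edge : Fin 4 → Fin k → Fin n}

theorem mem (h : IsConflictCycle C W col edge) (m : Fin 4) : W m ∈ C := by
  rw [h.eq_image]; exact Finset.mem_image_of_mem W (Finset.mem_univ m)

theorem add_one_ne (h : IsConflictCycle C W col edge) (m : Fin 4) : W (m + 1) ≠ W m :=
  fun hW => h.col_add_one_ne m ((h.isTileColK (m + 1)).eq (hW ▸ h.isTileColK m))

theorem sub_one_ne (h : IsConflictCycle C W col edge) (m : Fin 4) : W (m - 1) ≠ W m := by
  simpa using (h.add_one_ne (m - 1)).symm

theorem col_mem_colorsOf (h : IsConflictCycle C W col edge) {m : Fin 4} (hF : W (m + 2) ∈ F) :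
    col m ∈ colorsOf F :=
  ⟨W (m + 2), hF, h.col_add_two m ▸ h.isTileColK (m + 2)⟩

theorem edge_mem_mixes (h : IsConflictCycle C W col edge) {m : Fin 4} (h₁ : W (m + 1) ∈ F)
    (h₂ : W (m - 1) ∈ F) : edge m ∈ mixes (edgesOf F) :=
  ⟨_, ⟨_, h₁, h.mem_edgesIn _⟩, _, ⟨_, h₂, h.mem_edgesIn _⟩, h.mix m⟩

theorem edge_mem_nearby (h : IsConflictCycle C W col edge) {m : Fin 4}
    (hF : W (m + 1) ∈ F ∨ W (m - 1) ∈ F) : edge m ∈ nearby (edgesOf F) := by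
  rcases hF with hF | hF
  · obtain ⟨s, hs⟩ := h.near m
    exact ⟨_, ⟨_, hF, h.mem_edgesIn _⟩, s, hs⟩
  · obtain ⟨s, hs⟩ := h.near (m - 1)
    exact ⟨_, ⟨_, hF, h.mem_edgesIn _⟩, s, fun r hr => by simpa using (hs r hr).symm⟩

theorem mem_cheapTiles (h : IsConflictCycle C W col edge) {m : Fin 4} (hU : C \ F = {W m}) :
    W m ∈ cheapTiles F := by
  have hF : ∀ x, W x ≠ W m → W x ∈ F := fun x hx => by
    by_contra hxF
    exact hx (Finset.mem_singleton.mp (hU ▸ Finset.mem_sdiff.mpr ⟨h.mem x, hxF⟩))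
  have h₁ := hF _ (h.add_one_ne m)
  have h₃ := hF _ (h.sub_one_ne m)
  by_cases h₂ : W (m + 2) = W m
  · -- `W m` is its own opposite tile, so it contains two distinct forced edges
    refine Or.inr ⟨col m, trivial, (edge m, edge (m + 2)),
      ⟨h.edge_mem_mixes h₁ h₃, h.edge_mem_mixes ?_ ?_⟩, (h.edge_add_two_ne m).symm,
      h.isTileColK m, h.mem_edgesIn m, h₂ ▸ h.mem_edgesIn (m + 2)⟩
    · rwa [(by decide : ∀ x : Fin 4, x + 2 + 1 = x - 1) m]
    · rwa [(by decide : ∀ x : Fin 4, x + 2 - 1 = x + 1) m]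
  · exact Or.inl ⟨col m, h.col_mem_colorsOf (hF _ h₂), edge m, h.edge_mem_mixes h₁ h₃,
      h.isTileColK m, h.mem_edgesIn m⟩

theorem mem_costlyTiles (h : IsConflictCycle C W col edge) (hW : Function.Injective W)
    {m m' : Fin 4} (hU : C \ F = {W m, W m'}) : W m ∈ costlyTiles F := by
  have hF : ∀ x, x ≠ m → x ≠ m' → W x ∈ F := fun x hx hx' => by
    by_contra hxF
    have hx'' := hU ▸ Finset.mem_sdiff.mpr ⟨h.mem x, hxF⟩
    simp only [Finset.mem_insert, Finset.mem_singleton, hW.eq_iff] at hx''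
    tauto
  -- unless `W m'` is opposite to `W m`, the opposite tile and one neighbour of `W m` are in `F`
  have hcases : ∀ x y : Fin 4, (x + 1 ≠ x ∧ x + 1 ≠ y ∧ x - 1 ≠ x ∧ x - 1 ≠ y) ∨
      (x + 2 ≠ x ∧ x + 2 ≠ y ∧
        ((x + 1 ≠ x ∧ x + 1 ≠ y) ∨ (x - 1 ≠ x ∧ x - 1 ≠ y))) := by
    decide
  rcases hcases m m' with ⟨h₁, h₁', h₃, h₃'⟩ | ⟨h₂, h₂', h₁₃⟩
  · exact Or.inl ⟨col m, trivial, edge m, h.edge_mem_mixes (hF _ h₁ h₁') (hF _ h₃ h₃'),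
      h.isTileColK m, h.mem_edgesIn m⟩
  · refine Or.inr ⟨col m, h.col_mem_colorsOf (hF _ h₂ h₂'), edge m, h.edge_mem_nearby ?_,
      h.isTileColK m, h.mem_edgesIn m⟩
    exact h₁₃.imp (fun h₁ => hF _ h₁.1 h₁.2) (fun h₃ => hF _ h₃.1 h₃.2)

end IsConflictCycle

end ConflictCycle

section Conflicts

variable {n k : ℕ}

def conflictsOver (n k j : ℕ) (F : Finset (Finset (VHK n k))) :
    Set (Finset (Finset (VHK n k))) :=
  {C | IsConflictK n k C ∧ C.card = j ∧ F ⊆ C}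

variable {C F : Finset (Finset (VHK n k))} {U V : Finset (VHK n k)}

theorem IsConflictK.mem_cheapTiles (hC : IsConflictK n k C) (hU : C \ F = {U}) :
    U ∈ cheapTiles F := by
  obtain ⟨W, col, edge, h⟩ := hC.exists_isConflictCycle
  have hUC : U ∈ Finset.univ.image W :=
    h.eq_image ▸ Finset.sdiff_subset (hU ▸ Finset.mem_singleton_self U)
  obtain ⟨m, -, rfl⟩ := Finset.mem_image.mp hUC
  exact h.mem_cheapTiles hU

theorem IsConflictK.mem_costlyTiles (hC : IsConflictK n k C) (hcard : C.card = 4)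
    (hUV : C \ F = {U, V}) : U ∈ costlyTiles F := by
  obtain ⟨W, col, edge, h⟩ := hC.exists_isConflictCycle
  have hW : Function.Injective W := by
    have hinj := Finset.card_image_iff.mp (h.eq_image ▸ hcard : (Finset.univ.image W).card = 4)
    simpa using hinj
  have hrange : ∀ X ∈ C \ F, ∃ m, W m = X := fun X hX => by
    obtain ⟨m, -, hm⟩ := Finset.mem_image.mp (h.eq_image ▸ Finset.sdiff_subset hX)
    exact ⟨m, hm⟩
  obtain ⟨m, rfl⟩ := hrange U (by simp [hUV])
  obtain ⟨m', rfl⟩ := hrange V (by simp [hUV])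
  exact h.mem_costlyTiles hW hUV

theorem ncard_conflictsOver_card_add_one_le (F : Finset (Finset (VHK n k))) :
    (conflictsOver n k (F.card + 1) F).ncard ≤ (cheapTiles F).ncard := by
  calc _ ≤ ((fun U => ({U} : Finset (Finset (VHK n k)))) '' cheapTiles F).ncard := by
        refine Set.ncard_le_ncard_of_sdiff_mem (F := F) fun C ⟨hC, hcard, hFC⟩ => ?_
        obtain ⟨U, hU⟩ := Finset.card_eq_one.mp
          (by rw [Finset.card_sdiff_of_subset hFC, hcard]; simp)
        exact ⟨hFC, U, hC.mem_cheapTiles hU, hU.symm⟩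
    _ ≤ _ := Set.ncard_image_le (Set.toFinite _)

theorem ncard_conflictsOver_four_le (hF : F.card = 2) {m : ℕ}
    (hm : ∀ U ∈ costlyTiles F, (cheapTiles (insert U F)).ncard ≤ m) :
    (conflictsOver n k 4 F).ncard ≤ (costlyTiles F).ncard * m := by
  let P : Set (Finset (VHK n k) × Finset (VHK n k)) :=
    {x | x.1 ∈ costlyTiles F ∧ x.2 ∈ cheapTiles (insert x.1 F)}
  calc _ ≤ ((fun x => ({x.1, x.2} : Finset (Finset (VHK n k)))) '' P).ncard := by
        refine Set.ncard_le_ncard_of_sdiff_mem (F := F) fun C ⟨hC, hcard, hFC⟩ => ?_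
        obtain ⟨U, V, hUV, hCF⟩ := Finset.card_eq_two.mp
          (by rw [Finset.card_sdiff_of_subset hFC, hcard, hF])
        have hV : C \ insert U F = {V} := by
          rw [Finset.sdiff_insert, hCF, Finset.erase_insert (by simpa using hUV)]
        exact ⟨hFC, (U, V), ⟨hC.mem_costlyTiles hcard hCF, hC.mem_cheapTiles hV⟩, hCF.symm⟩
    _ ≤ P.ncard := Set.ncard_image_le (Set.toFinite _)
    _ ≤ _ := Set.ncard_setOf_fst_mem_le hm

theorem exists_ncard_conflictsOver_le_mul_pow (hk : 1 ≤ k) :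
    ∃ c, ∀ n (F : Finset (Finset (VHK n k))), (∀ T ∈ F, IsTileK n k T) →
      (F.card ≤ 3 → (conflictsOver n k (F.card + 1) F).ncard ≤ c * n ^ (k ^ 2)) ∧
      (F.card = 2 → (conflictsOver n k 4 F).ncard ≤ c * n ^ (2 * k ^ 2 + 1)) := by
  obtain ⟨c₁, hc₁⟩ := exists_ncard_cheapTiles_le hk 3
  obtain ⟨c₂, hc₂⟩ := exists_ncard_costlyTiles_le (k := k) 2
  refine ⟨c₁ + c₂ * c₁, fun n F hF => ⟨fun h3 => ?_, fun h2 => ?_⟩⟩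
  · calc _ ≤ c₁ * n ^ (k ^ 2) :=
          (ncard_conflictsOver_card_add_one_le F).trans (hc₁ n F hF h3)
      _ ≤ _ := by gcongr; omega
  · have hm : ∀ U ∈ costlyTiles F, (cheapTiles (insert U F)).ncard ≤ c₁ * n ^ (k ^ 2) :=
      fun U hU => hc₁ n _
        ((Finset.forall_mem_insert _ _ _).mpr ⟨isTileK_of_mem_costlyTiles hU, hF⟩)
        ((Finset.card_insert_le U F).trans (by omega))
    calc _ ≤ (costlyTiles F).ncard * (c₁ * n ^ (k ^ 2)) := ncard_conflictsOver_four_le h2 hm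
      _ ≤ c₂ * n ^ (k ^ 2 + 1) * (c₁ * n ^ (k ^ 2)) := by gcongr; exact hc₂ n F hF h2.le
      _ = c₂ * c₁ * n ^ (2 * k ^ 2 + 1) := by ring
      _ ≤ _ := by gcongr; omega

end Conflicts

theorem eventually_mul_pow_div_le_rpow {N : ℕ} {c ε : ℝ} (hε : 0 < ε) (hNε : N * ε < 1)
    (a : ℕ) :
    ∀ᶠ n : ℕ in Filter.atTop,
      c * ((n : ℝ) ^ N / 2) ^ a / n ≤ ((n : ℝ) ^ N / 2) ^ ((a : ℝ) - ε) := by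
  have hδ : 0 < 1 - N * ε := by linarith
  filter_upwards [((tendsto_rpow_atTop hδ).comp tendsto_natCast_atTop_atTop).eventually_ge_atTop c,
    Filter.eventually_ge_atTop 1] with n hc hn
  have hn₀ : (0 : ℝ) < n := by exact_mod_cast hn
  set D := (n : ℝ) ^ N / 2
  have hD : 0 < D := by positivity
  have hcD : c * D ^ ε ≤ n :=
    calc c * D ^ ε ≤ (n : ℝ) ^ (1 - N * ε) * ((n : ℝ) ^ N) ^ ε := by
          gcongr
          · exact hc
          · exact half_le_self (by positivity)
      _ = n := by
          rw [← Real.rpow_natCast, ← Real.rpow_mul hn₀.le, ← Real.rpow_add hn₀]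
          simp
  rw [Real.rpow_sub hD, Real.rpow_natCast, div_le_div_iff₀ hn₀ (by positivity)]
  calc c * D ^ a * D ^ ε = D ^ a * (c * D ^ ε) := by ring
    _ ≤ D ^ a * n := by gcongr

theorem natCast_le_mul_div {x c n k : ℕ} (hn : 1 ≤ n) (h : x ≤ c * n ^ (k ^ 2)) :
    (x : ℝ) ≤ 4 * (c + 1) * ((n : ℝ) ^ (k ^ 2 + 1) / 2) / n := by
  have hn₀ : (0 : ℝ) < n := by exact_mod_cast hn
  have hrhs :
      4 * (c + 1) * ((n : ℝ) ^ (k ^ 2 + 1) / 2) / n = 2 * (c + 1) * (n : ℝ) ^ (k ^ 2) := by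
    field_simp; ring
  have hx : (x : ℝ) ≤ c * (n : ℝ) ^ (k ^ 2) := by exact_mod_cast h
  rw [hrhs]
  nlinarith [pow_nonneg hn₀.le (k ^ 2)]

theorem natCast_le_mul_sq_div {x c n k : ℕ} (hn : 1 ≤ n) (h : x ≤ c * n ^ (2 * k ^ 2 + 1)) :
    (x : ℝ) ≤ 4 * (c + 1) * ((n : ℝ) ^ (k ^ 2 + 1) / 2) ^ 2 / n := by
  have hn₀ : (0 : ℝ) < n := by exact_mod_cast hn
  have hrhs : 4 * (c + 1) * ((n : ℝ) ^ (k ^ 2 + 1) / 2) ^ 2 / n =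
      (c + 1) * (n : ℝ) ^ (2 * k ^ 2 + 1) := by
    field_simp; ring
  have hx : (x : ℝ) ≤ c * (n : ℝ) ^ (2 * k ^ 2 + 1) := by exact_mod_cast h
  rw [hrhs]
  nlinarith [pow_nonneg hn₀.le (2 * k ^ 2 + 1)]

theorem exists_ncard_conflictsOver_le_mul_div {k : ℕ} (hk : 1 ≤ k) :
    ∃ c : ℝ, 0 < c ∧ ∀ n : ℕ, 1 ≤ n → ∀ F : Finset (Finset (VHK n k)),
      (∀ T ∈ F, IsTileK n k T) →
      (F.card = 2 →
        ((conflictsOver n k 3 F).ncard : ℝ) ≤ c * ((n : ℝ) ^ (k ^ 2 + 1) / 2) / n ∧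
        ((conflictsOver n k 4 F).ncard : ℝ) ≤ c * ((n : ℝ) ^ (k ^ 2 + 1) / 2) ^ 2 / n) ∧
      (F.card = 3 →
        ((conflictsOver n k 4 F).ncard : ℝ) ≤ c * ((n : ℝ) ^ (k ^ 2 + 1) / 2) / n) := by
  obtain ⟨c, hc⟩ := exists_ncard_conflictsOver_le_mul_pow hk
  refine ⟨4 * (c + 1), by positivity,
    fun n hn F hF => ⟨fun h2 => ⟨?_, ?_⟩, fun h3 => ?_⟩⟩
  · have h := (hc n F hF).1 (by omega)
    rw [h2] at h
    exact natCast_le_mul_div hn h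
  · exact natCast_le_mul_sq_div hn ((hc n F hF).2 h2)
  · have h := (hc n F hF).1 (by omega)
    rw [h3] at h
    exact natCast_le_mul_div hn h

theorem exists_ncard_conflictsOver_le_rpow {k : ℕ} (hk : 1 ≤ k) {ε : ℝ}
    (hε : 0 < ε) (hεk : ε < 1 / (k ^ 2 + 2)) :
    ∃ n₀ : ℕ, ∀ n : ℕ, n₀ ≤ n → ∀ j j' : ℕ, (j = 3 ∨ j = 4) → 2 ≤ j' → j' ≤ j - 1 →
      ∀ F : Finset (Finset (VHK n k)), F.card = j' → (∀ T ∈ F, IsTileK n k T) →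
        ((conflictsOver n k j F).ncard : ℝ) ≤
          ((n : ℝ) ^ (k ^ 2 + 1) / 2) ^ ((j : ℝ) - (j' : ℝ) - ε) := by
  obtain ⟨c, -, hbound⟩ := exists_ncard_conflictsOver_le_mul_div hk
  have hNε : ((k ^ 2 + 1 : ℕ) : ℝ) * ε < 1 := by
    rw [lt_div_iff₀ (by positivity)] at hεk
    push_cast; nlinarith
  obtain ⟨n₀, hn₀⟩ := Filter.eventually_atTop.mp
    ((eventually_mul_pow_div_le_rpow (c := c) hε hNε 1).and
      ((eventually_mul_pow_div_le_rpow (c := c) hε hNε 2).and (Filter.eventually_ge_atTop 1)))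
  refine ⟨n₀, fun n hn j j' hj hj' hj'j F hF hFt => ?_⟩
  obtain ⟨h₁, h₂, hn₁⟩ := hn₀ n hn
  push_cast at h₁ h₂
  rw [pow_one] at h₁
  have hb := hbound n hn₁ F hFt
  rcases hj with rfl | rfl
  · obtain rfl : j' = 2 := by omega
    rw [show ((3 : ℕ) : ℝ) - (2 : ℕ) - ε = 1 - ε by norm_num]
    exact (hb.1 hF).1.trans h₁
  · obtain rfl | rfl : j' = 2 ∨ j' = 3 := by omega
    · rw [show ((4 : ℕ) : ℝ) - (2 : ℕ) - ε = 2 - ε by norm_num]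
      exact (hb.1 hF).2.trans h₂
    · rw [show ((4 : ℕ) : ℝ) - (3 : ℕ) - ε = 1 - ε by norm_num]
      exact (hb.2 hF).trans h₁

/-- In the auxiliary hypergraph `H₁` built from `K^{(k)}_{n,…,n}` (with `k ≥ 2`), with
`d = n^{k²+1}/2` there is a constant `c` depending only on `k` such that: every pair of
distinct tiles of `H₁` lies in at most `c·d/n` conflicts of `𝒞` of size 3 and in at most
`c·d²/n` conflicts of `𝒞` of size 4, and every triple of distinct tiles of `H₁` lies in
at most `c·d/n` conflicts of `𝒞` of size 4; in particular,
`Δ_{j'}(𝒞^{(j)}) ≤ d^{j−j'−ε}` for all `j ∈ {3,4}`, `2 ≤ j' ≤ j−1`, any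
`ε ∈ (0, 1/(k²+2))`, and sufficiently large `n`. -/
theorem stmt19 (k : ℕ) (hk : 2 ≤ k) :
    (∃ c : ℝ, 0 < c ∧ ∀ n : ℕ, 1 ≤ n →
      (∀ T T' : Finset (VHK n k), IsTileK n k T → IsTileK n k T' → T ≠ T' →
        ({C : Finset (Finset (VHK n k)) |
            IsConflictK n k C ∧ C.card = 3 ∧ T ∈ C ∧ T' ∈ C}.ncard : ℝ) ≤
          c * ((n : ℝ) ^ (k ^ 2 + 1) / 2) / n ∧
        ({C : Finset (Finset (VHK n k)) |
            IsConflictK n k C ∧ C.card = 4 ∧ T ∈ C ∧ T' ∈ C}.ncard : ℝ) ≤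
          c * ((n : ℝ) ^ (k ^ 2 + 1) / 2) ^ 2 / n) ∧
      (∀ T T' T'' : Finset (VHK n k), IsTileK n k T → IsTileK n k T' →
        IsTileK n k T'' → T ≠ T' → T ≠ T'' → T' ≠ T'' →
        ({C : Finset (Finset (VHK n k)) |
            IsConflictK n k C ∧ C.card = 4 ∧ T ∈ C ∧ T' ∈ C ∧ T'' ∈ C}.ncard : ℝ) ≤
          c * ((n : ℝ) ^ (k ^ 2 + 1) / 2) / n)) ∧
    ∀ ε : ℝ, 0 < ε → ε < 1 / (k ^ 2 + 2) → ∃ n₀ : ℕ, ∀ n : ℕ, n₀ ≤ n →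
      ∀ j j' : ℕ, (j = 3 ∨ j = 4) → 2 ≤ j' → j' ≤ j - 1 →
        ∀ F : Finset (Finset (VHK n k)), F.card = j' → (∀ T ∈ F, IsTileK n k T) →
          ({C : Finset (Finset (VHK n k)) |
              IsConflictK n k C ∧ C.card = j ∧ F ⊆ C}.ncard : ℝ) ≤
            ((n : ℝ) ^ (k ^ 2 + 1) / 2) ^ ((j : ℝ) - (j' : ℝ) - ε) := by
  obtain ⟨c, hc, hbound⟩ := exists_ncard_conflictsOver_le_mul_div (k := k) (by omega)
  refine ⟨⟨c, hc, fun n hn => ⟨fun T T' hT hT' hTT' => ?_,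
    fun T T' T'' hT hT' hT'' h₁ h₂ h₃ => ?_⟩⟩,
    fun ε hε hεk => exists_ncard_conflictsOver_le_rpow (by omega) hε hεk⟩
  · simpa [conflictsOver, Finset.insert_subset_iff] using
      (hbound n hn {T, T'} (by simp [hT, hT'])).1 (Finset.card_pair hTT')
  · simpa [conflictsOver, Finset.insert_subset_iff, and_assoc] using
      (hbound n hn {T, T', T''} (by simp [hT, hT', hT''])).2
        (Finset.card_eq_three.mpr ⟨T, T', T'', h₁, h₂, h₃, rfl⟩)
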